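/- For all integers n and r with 0 ≤ r ≤ n−1, the cardinality of B⁺(n,r) equals T(n,r). -/

import Mathlib

open Finset

/-- A letter for arrangements: white, black, or decorated. -/
inductive Letter : Type
  | white : Letter
  | black : Letter
  | decorated : Letter
  deriving DecidableEq

/-- `B n r`: words of length `n` over `Letter` with exactly `r` black letters
whose last letter is not black. -/
def B (n r : ℕ) : Set (List Letter) :=
  {w | w.length = n ∧ w.count Letter.black = r ∧ w.getLast? ≠ some Letter.black}

/-- `B⁺ n r`: members of `B n r` containing a decorated letter strictly to the
right of the last black letter. -/
def Bplus (n r : ℕ) : Set (List Letter) :=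
  {w | w ∈ B n r ∧ ∃ a b : List Letter, w = a ++ Letter.decorated :: b ∧ Letter.black ∉ b}

/-- `T n r = ∑_{j=r+1}^{n} C(n,j)·C(j−1,r)`. -/
def T (n r : ℕ) : ℕ := ∑ j ∈ Icc (r + 1) n, n.choose j * (j - 1).choose r

/-!
Reversal turns `Bplus n r` into the words of length `n` with `r` black letters in which a
decorated letter occurs before every black one (the last letter is then automatically not
black). Such a word of length `n + 1` is either a decorated letter followed by any word of
length `n` with `r` black letters, of which there are `C(n,r) 2^(n-r)`, or a white letter
followed by a shorter word of the same kind. By Pascal's rule and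
`∑ₖ C(n,k) C(k,r) = C(n,r) 2^(n-r)`, `T` satisfies the same recursion.
-/

theorem sum_choose_mul_choose (n r : ℕ) :
    ∑ k ∈ range (n + 1), n.choose k * k.choose r = n.choose r * 2 ^ (n - r) := by
  rcases lt_or_ge n r with hnr | hrn
  · rw [Nat.choose_eq_zero_of_lt hnr, zero_mul]
    exact sum_eq_zero fun k hk =>
      by rw [Nat.choose_eq_zero_of_lt (n := k) (by grind), mul_zero]
  · have below : ∑ k ∈ range r, n.choose k * k.choose r = 0 :=
      sum_eq_zero fun k hk => by rw [Nat.choose_eq_zero_of_lt (mem_range.1 hk), mul_zero]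
    rw [← sum_range_add_sum_Ico _ (by omega : r ≤ n + 1), below, zero_add,
      sum_Ico_eq_sum_range, Nat.sub_add_comm hrn, ← Nat.sum_range_choose, mul_sum]
    refine sum_congr rfl fun i _ => ?_
    rw [Nat.choose_mul (Nat.le_add_right r i), Nat.add_sub_cancel_left]

theorem T_eq_sum_range (n r : ℕ) : T n r = ∑ k ∈ range n, n.choose (k + 1) * k.choose r := by
  have vanish : ∀ j ∈ Icc 1 n, j ∉ Icc (r + 1) n → n.choose j * (j - 1).choose r = 0 :=
    fun j hj hj' => by
      rw [Nat.choose_eq_zero_of_lt (n := j - 1) (by grind), mul_zero]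
  rw [T, sum_subset (Icc_subset_Icc_left (Nat.le_add_left 1 r)) vanish,
    ← Ico_add_one_right_eq_Icc, sum_Ico_eq_sum_range, Nat.add_sub_cancel]
  simp only [add_comm 1, Nat.add_sub_cancel]

theorem T_succ (n r : ℕ) : T (n + 1) r = n.choose r * 2 ^ (n - r) + T n r := by
  simp only [T_eq_sum_range, Nat.choose_succ_succ', add_mul, sum_add_distrib,
    sum_choose_mul_choose]
  rw [sum_range_succ (fun k => n.choose (k + 1) * k.choose r), Nat.choose_succ_self, zero_mul,
    add_zero]

section Lists

variable {α : Type*}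

def OccursBefore (d c : α) (l : List α) : Prop :=
  ∃ b a, l = b ++ d :: a ∧ c ∉ b

theorem not_occursBefore_nil (d c : α) : ¬ OccursBefore d c [] := by
  simp [OccursBefore]

theorem occursBefore_cons {d c x : α} {l : List α} :
    OccursBefore d c (x :: l) ↔ x = d ∨ x ≠ c ∧ OccursBefore d c l := by
  simp only [OccursBefore, List.cons_eq_append_iff]
  constructor
  · rintro ⟨b, a, ⟨rfl, h⟩ | ⟨b', rfl, rfl⟩, hc⟩
    · exact .inl (List.cons.inj h).1.symm
    · simp only [List.mem_cons, not_or] at hc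
      exact .inr ⟨Ne.symm hc.1, b', a, rfl, hc.2⟩
  · rintro (rfl | ⟨hx, b, a, rfl, hb⟩)
    · exact ⟨[], l, .inl ⟨rfl, rfl⟩, List.not_mem_nil⟩
    · exact ⟨x :: b, a, .inr ⟨b, rfl, rfl⟩, by simp [Ne.symm hx, hb]⟩

theorem occursBefore_reverse {d c : α} {l : List α} :
    OccursBefore d c l.reverse ↔ ∃ a b, l = a ++ d :: b ∧ c ∉ b := by
  simp only [OccursBefore, List.reverse_eq_append_iff, List.reverse_cons, List.append_assoc,
    List.singleton_append]
  exact ⟨fun ⟨b, a, h, hc⟩ => ⟨a.reverse, b.reverse, h, by simpa using hc⟩,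
    fun ⟨a, b, h, hc⟩ => ⟨b.reverse, a.reverse, by simpa using h, by simpa using hc⟩⟩

theorem OccursBefore.head?_ne {d c : α} {l : List α} (h : OccursBefore d c l) (hdc : d ≠ c) :
    l.head? ≠ some c := by
  obtain ⟨_ | ⟨x, b⟩, a, rfl, hc⟩ := h
  · simpa using hdc
  · simp only [List.cons_append, List.head?_cons, ne_eq, Option.some.injEq]
    exact fun hx => hc (hx ▸ List.mem_cons_self)

theorem disjoint_image_cons [DecidableEq α] {x y : α} (hxy : x ≠ y)
    (s t : Finset (List α)) : Disjoint (s.image (x :: ·)) (t.image (y :: ·)) := by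
  simp only [disjoint_left, mem_image]
  rintro _ ⟨a, -, rfl⟩ ⟨b, -, h⟩
  exact hxy (List.cons.inj h).1.symm

theorem card_image_cons [DecidableEq α] (x : α) (s : Finset (List α)) :
    (s.image (x :: ·)).card = s.card :=
  card_image_of_injective s fun _ _ h => (List.cons.inj h).2

end Lists

def wordsWithBlacks : ℕ → ℕ → Finset (List Letter)
  | 0, r => if r = 0 then {[]} else ∅
  | n + 1, 0 =>
      (wordsWithBlacks n 0).image (.white :: ·) ∪ (wordsWithBlacks n 0).image (.decorated :: ·)
  | n + 1, r + 1 =>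
      (wordsWithBlacks n (r + 1)).image (.white :: ·) ∪
        (wordsWithBlacks n (r + 1)).image (.decorated :: ·) ∪
        (wordsWithBlacks n r).image (.black :: ·)

theorem mem_wordsWithBlacks {n r : ℕ} {l : List Letter} :
    l ∈ wordsWithBlacks n r ↔ l.length = n ∧ l.count .black = r := by
  induction n generalizing r l with
  | zero => cases l <;> cases r <;> simp [wordsWithBlacks, eq_comm]
  | succ n ih =>
    cases l with
    | nil => cases r <;> simp [wordsWithBlacks]
    | cons x l => cases r <;> cases x <;> simp [wordsWithBlacks, ih]

theorem card_wordsWithBlacks (n r : ℕ) :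
    (wordsWithBlacks n r).card = n.choose r * 2 ^ (n - r) := by
  induction n generalizing r with
  | zero => cases r <;> simp [wordsWithBlacks]
  | succ n ih =>
    cases r with
    | zero =>
      rw [wordsWithBlacks, card_union_of_disjoint (disjoint_image_cons (by decide) _ _),
        card_image_cons, card_image_cons, ih]
      simp only [Nat.choose_zero_right, Nat.sub_zero, pow_succ]
      ring
    | succ r =>
      rw [wordsWithBlacks, card_union_of_disjoint (disjoint_union_left.2
          ⟨disjoint_image_cons (by decide) _ _, disjoint_image_cons (by decide) _ _⟩),
        card_union_of_disjoint (disjoint_image_cons (by decide) _ _), card_image_cons,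
        card_image_cons, card_image_cons, ih, ih, Nat.choose_succ_succ', Nat.add_sub_add_right]
      rcases lt_or_ge n (r + 1) with hn | hn
      · simp [Nat.choose_eq_zero_of_lt hn]
      · rw [show n - r = n - (r + 1) + 1 by omega, pow_succ]
        ring

def decoratedFirstWords : ℕ → ℕ → Finset (List Letter)
  | 0, _ => ∅
  | n + 1, r => (wordsWithBlacks n r).image (.decorated :: ·) ∪
      (decoratedFirstWords n r).image (.white :: ·)

theorem mem_decoratedFirstWords {n r : ℕ} {l : List Letter} :
    l ∈ decoratedFirstWords n r ↔
      l ∈ wordsWithBlacks n r ∧ OccursBefore .decorated .black l := by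
  induction n generalizing l with
  | zero => cases l <;> simp [decoratedFirstWords, mem_wordsWithBlacks, not_occursBefore_nil]
  | succ n ih =>
    cases l with
    | nil => simp [decoratedFirstWords, mem_wordsWithBlacks]
    | cons x l =>
      cases x <;> simp [decoratedFirstWords, ih, mem_wordsWithBlacks, occursBefore_cons]

theorem card_decoratedFirstWords (n r : ℕ) : (decoratedFirstWords n r).card = T n r := by
  induction n with
  | zero => simp [decoratedFirstWords, T]
  | succ n ih =>
    rw [decoratedFirstWords, card_union_of_disjoint (disjoint_image_cons (by decide) _ _),
      card_image_cons, card_image_cons, ih, card_wordsWithBlacks, T_succ]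

theorem mem_Bplus_iff {n r : ℕ} {w : List Letter} :
    w ∈ Bplus n r ↔ w.reverse ∈ decoratedFirstWords n r := by
  simp only [Bplus, B, Set.mem_ofPred_eq, mem_decoratedFirstWords, mem_wordsWithBlacks,
    List.length_reverse, List.count_reverse, ← occursBefore_reverse]
  constructor
  · rintro ⟨⟨hl, hc, -⟩, h⟩
    exact ⟨⟨hl, hc⟩, h⟩
  · rintro ⟨⟨hl, hc⟩, h⟩
    exact ⟨⟨hl, hc, List.head?_reverse ▸ h.head?_ne (by decide)⟩, h⟩

theorem card_Bplus_eq_T_general (n r : ℕ) : (Bplus n r).ncard = T n r := by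
  have hBplus : Bplus n r = List.reverse '' (decoratedFirstWords n r : Set (List Letter)) := by
    ext w
    rw [mem_Bplus_iff, List.reverse_involutive.image_eq_preimage_symm, Set.mem_preimage, mem_coe]
  rw [hBplus, Set.ncard_image_of_injective _ List.reverse_injective, Set.ncard_coe_finset,
    card_decoratedFirstWords]

theorem card_Bplus_eq_T (n r : ℕ) (h : r + 1 ≤ n) : (Bplus n r).ncard = T n r :=
  card_Bplus_eq_T_general n r
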